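/- arXiv:2503.23591 — 2 statements merged into one kernel-verified Lean document; each statement's English description precedes it below -/
import Mathlib

section
/- Let G be a k-graph on n vertices with δ_{k−1}(G) ≥ εn. For every ε > 0 there exists an integer m and n₀ such that if n > n₀, there exist (k−2)-sets f_1, ..., f_m ⊆ V(G) with |⃐N(f_1) ∪ ... ∪ ⃐N(f_m)| > C(n, k−1) − C(εn, k−1). -/
open Finset

/-- The neighbourhood `N(e) = {v : e ∪ {v} ∈ E}` of a set `e` in a hypergraph `G`. -/
def nbhd {α : Type*} [Fintype α] [DecidableEq α] (G : Finset (Finset α))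
    (e : Finset α) : Finset α :=
  Finset.univ.filter fun v => insert v e ∈ G

/-- The back neighbourhood of `f`: all `(k-1)`-sets `e` with `e ∪ {v} ∈ E` for every
`v ∈ f`. -/
def backNbhd {α : Type*} [Fintype α] [DecidableEq α] (G : Finset (Finset α))
    (k : ℕ) (f : Finset α) : Finset (Finset α) :=
  (Finset.univ.powersetCard (k - 1)).filter fun e => ∀ v ∈ f, insert v e ∈ G

/-!
Every `(k-1)`-set `e` lies in `⃐N(g)` for each of the at least `C(⌊εn⌋, k-2)` many
`(k-2)`-sets `g ⊆ N(e)`, and `C(⌊εn⌋, j) ≥ (ε/2)^j C(n, j)` once `n` is large. Averaging over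
all `(k-2)`-sets, some `g` therefore covers a fraction `c = (ε/2)^(k-2)` of any family of
`(k-1)`-sets, so choosing the `f_i` greedily leaves at most `(1-c)^m C(n, k-1)` sets uncovered,
which is less than `(ε/2)^(k-1) C(n, k-1) ≤ C(⌊εn⌋, k-1)` for `m` large.
-/

theorem Nat.half_pow_mul_choose_le_choose_floor {ε : ℝ} (hε : 0 ≤ ε) {n j : ℕ}
    (h : 2 * j ≤ ε * n) : (ε / 2) ^ j * n.choose j ≤ (⌊ε * n⌋₊.choose j : ℝ) := by
  have hfloor : ε * n < ⌊ε * n⌋₊ + 1 := Nat.lt_floor_add_one _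
  have hj : j ≤ ⌊ε * n⌋₊ + 1 := by exact_mod_cast (show (j : ℝ) ≤ ⌊ε * n⌋₊ + 1 by linarith)
  calc (ε / 2) ^ j * n.choose j ≤ (ε / 2) ^ j * ((n : ℝ) ^ j / j.factorial) := by
        gcongr; exact Nat.choose_le_pow_div j n
    _ = (ε * n / 2) ^ j / j.factorial := by ring
    _ ≤ ((⌊ε * n⌋₊ + 1 - j : ℕ) : ℝ) ^ j / j.factorial := by
        gcongr
        rw [Nat.cast_sub hj]
        push_cast
        linarith
    _ ≤ ⌊ε * n⌋₊.choose j := Nat.pow_le_choose j _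

theorem Finset.exists_card_sdiff_biUnion_le {β γ : Type*} [DecidableEq β] (S : Finset β)
    (B : γ → Finset β) (P : γ → Prop) {c : ℝ} (hc : c ≤ 1)
    (hstep : ∀ U ⊆ S, ∃ g, P g ∧ c * #U ≤ #(U ∩ B g)) (m : ℕ) :
    ∃ f : Fin m → γ, (∀ i, P (f i)) ∧
      (#(S \ univ.biUnion fun i => B (f i)) : ℝ) ≤ (1 - c) ^ m * #S := by
  induction m with
  | zero => exact ⟨Fin.elim0, fun i => i.elim0, by simp⟩
  | succ m ih =>
    obtain ⟨f, hfP, hf⟩ := ih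
    set U := S \ univ.biUnion fun i => B (f i)
    obtain ⟨g, hgP, hg⟩ := hstep U sdiff_subset
    set f' : Fin (m + 1) → γ := Fin.snoc f g
    refine ⟨f', Fin.lastCases (by simpa [f']) (by simpa [f']), ?_⟩
    have hsplit : S \ (univ.biUnion fun i => B (f' i)) = U \ B g := by
      ext e
      simp [U, f', Fin.forall_fin_succ', and_assoc]
    have hcard : (#(U \ B g) : ℝ) = #U - #(U ∩ B g) := by
      rw [← card_inter_add_card_sdiff U (B g)]
      push_cast
      ring
    calc (#(S \ univ.biUnion fun i => B (f' i)) : ℝ)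
        = #(U \ B g) := by rw [hsplit]
      _ ≤ (1 - c) * #U := by rw [hcard]; linarith
      _ ≤ (1 - c) * ((1 - c) ^ m * #S) := by gcongr
      _ = (1 - c) ^ (m + 1) * #S := by ring

section Hypergraph

variable {α : Type*} [Fintype α] [DecidableEq α] {G : Finset (Finset α)} {k : ℕ}

theorem mem_backNbhd_of_subset_nbhd {e g : Finset α} (he : #e = k - 1) (hg : g ⊆ nbhd G e) :
    e ∈ backNbhd G k g := by
  simp only [backNbhd, mem_filter, mem_powersetCard, subset_univ, true_and]
  exact ⟨he, fun v hv => by simpa [nbhd] using hg hv⟩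

theorem le_one_of_mul_card_le_card_nbhd [Nonempty α] {ε : ℝ} {e : Finset α}
    (h : ε * Fintype.card α ≤ #(nbhd G e)) : ε ≤ 1 := by
  have hcard : (#(nbhd G e) : ℝ) ≤ Fintype.card α := by exact_mod_cast card_le_univ _
  have hpos : (0 : ℝ) < Fintype.card α := by exact_mod_cast Fintype.card_pos
  exact le_of_mul_le_mul_right (a := (Fintype.card α : ℝ)) (by linarith) hpos

theorem card_mul_choose_le_sum_card_inter_backNbhd {U : Finset (Finset α)} {δ : ℕ} (j : ℕ)
    (hU : U ⊆ univ.powersetCard (k - 1)) (hδ : ∀ e ∈ U, δ ≤ #(nbhd G e)) :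
    #U * δ.choose j ≤ ∑ g ∈ univ.powersetCard j, #(U ∩ backNbhd G k g) := by
  have hcount := sum_card_bipartiteAbove_eq_sum_card_bipartiteBelow
    (s := U) (t := univ.powersetCard j) (r := fun e g => e ∈ backNbhd G k g)
  simp only [bipartiteBelow, filter_mem_eq_inter] at hcount
  rw [← hcount, ← smul_eq_mul, ← sum_const]
  refine sum_le_sum fun e he => ?_
  have he_card : #e = k - 1 := (mem_powersetCard.mp (hU he)).2
  calc δ.choose j ≤ (#(nbhd G e)).choose j := Nat.choose_le_choose j (hδ e he)
    _ = #((nbhd G e).powersetCard j) := (card_powersetCard j _).symm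
    _ ≤ _ := card_le_card fun g hg => by
      obtain ⟨hg_sub, hg_card⟩ := mem_powersetCard.mp hg
      exact mem_filter.mpr ⟨mem_powersetCard.mpr ⟨subset_univ g, hg_card⟩,
        mem_backNbhd_of_subset_nbhd he_card hg_sub⟩

theorem exists_card_inter_backNbhd_ge {U : Finset (Finset α)} {δ j : ℕ} {c : ℝ}
    (hU : U ⊆ univ.powersetCard (k - 1)) (hδ : ∀ e ∈ U, δ ≤ #(nbhd G e))
    (hj : j ≤ Fintype.card α) (hc : c * (Fintype.card α).choose j ≤ δ.choose j) :
    ∃ g, #g = j ∧ c * #U ≤ #(U ∩ backNbhd G k g) := by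
  have hne : (powersetCard j (univ : Finset α)).Nonempty := powersetCard_nonempty.mpr hj
  have hsum : ∑ _g ∈ powersetCard j (univ : Finset α), c * #U ≤
      ∑ g ∈ univ.powersetCard j, (#(U ∩ backNbhd G k g) : ℝ) := by
    rw [sum_const, card_powersetCard, card_univ, nsmul_eq_mul]
    calc (Fintype.card α).choose j * (c * #U) = #U * (c * (Fintype.card α).choose j) := by ring
      _ ≤ #U * δ.choose j := by gcongr
      _ ≤ _ := by exact_mod_cast card_mul_choose_le_sum_card_inter_backNbhd j hU hδ
  obtain ⟨g, hg, hcover⟩ := exists_le_of_sum_le hne hsum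
  exact ⟨g, (mem_powersetCard.mp hg).2, hcover⟩

end Hypergraph

theorem back_nbhds_cover_general (k : ℕ) (ε : ℝ) (hε : 0 < ε) :
    ∃ m n₀ : ℕ, ∀ (α : Type) [Fintype α] [DecidableEq α]
      (G : Finset (Finset α)), (∀ e ∈ G, e.card = k) →
      n₀ < Fintype.card α →
      (∀ e : Finset α, e.card = k - 1 →
        ε * (Fintype.card α : ℝ) ≤ ((nbhd G e).card : ℝ)) →
      ∃ f : Fin m → Finset α, (∀ i, (f i).card = k - 2) ∧
        ((Nat.choose (Fintype.card α) (k - 1) : ℝ) -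
            (Nat.choose ⌊ε * (Fintype.card α : ℝ)⌋₊ (k - 1) : ℝ)) <
          (((Finset.univ.biUnion fun i => backNbhd G k (f i)).card : ℝ)) := by
  obtain ⟨m, hm⟩ := exists_pow_lt_of_lt_one (by positivity : (0 : ℝ) < (ε / 2) ^ (k - 1))
    (sub_lt_self 1 (by positivity : (0 : ℝ) < (ε / 2) ^ (k - 2)))
  refine ⟨m, k + ⌈2 * k / ε⌉₊, fun α _ _ G _ hn hdeg => ?_⟩
  set n := Fintype.card α
  have hεn : 2 * k ≤ ε * n := by
    have hceil : (⌈2 * k / ε⌉₊ : ℝ) ≤ n := by exact_mod_cast (by omega : ⌈2 * k / ε⌉₊ ≤ n)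
    have := (div_le_iff₀ hε).mp ((Nat.le_ceil _).trans hceil)
    linarith
  have hε1 : ε ≤ 1 := by
    obtain ⟨e, -, he⟩ := exists_subset_card_eq (s := (univ : Finset α)) (n := k - 1)
      (by simp only [card_univ]; omega)
    have : Nonempty α := Fintype.card_pos_iff.mp (by omega)
    exact le_one_of_mul_card_le_card_nbhd (hdeg e he)
  set N := ⌊ε * n⌋₊
  have hN : ∀ e ∈ univ.powersetCard (k - 1), N ≤ #(nbhd G e) := fun e he =>
    Nat.floor_le_of_le (hdeg e (mem_powersetCard.mp he).2)
  have hratio : ∀ j ≤ k, (ε / 2) ^ j * n.choose j ≤ (N.choose j : ℝ) := fun j hj =>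
    Nat.half_pow_mul_choose_le_choose_floor hε.le (by
      have : (j : ℝ) ≤ k := by exact_mod_cast hj
      linarith)
  obtain ⟨f, hf_card, hf⟩ := exists_card_sdiff_biUnion_le (univ.powersetCard (k - 1))
    (backNbhd G k) (fun g => #g = k - 2) (pow_le_one₀ (by positivity) (by linarith))
    (fun U hU => exists_card_inter_backNbhd_ge hU (fun e he => hN e (hU he)) (by omega)
      (hratio (k - 2) (by omega))) m
  refine ⟨f, hf_card, ?_⟩
  have hcovered : (univ.biUnion fun i => backNbhd G k (f i)) ⊆ univ.powersetCard (k - 1) :=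
    biUnion_subset.mpr fun i _ => filter_subset _ _
  rw [cast_card_sdiff hcovered, card_powersetCard, card_univ] at hf
  have hchoose_pos : (0 : ℝ) < n.choose (k - 1) := by exact_mod_cast Nat.choose_pos (by omega)
  have := mul_lt_mul_of_pos_right hm hchoose_pos
  linarith [hratio (k - 1) (by omega)]

/-- Claim 4.4: for every `ε > 0` there exist `m` and `n₀` such that every `k`-graph
`G` on `n > n₀` vertices with minimum codegree at least `εn` admits `(k-2)`-sets
`f_1, ..., f_m` with `|⃐N(f_1) ∪ ⋯ ∪ ⃐N(f_m)| > C(n, k-1) - C(⌊εn⌋, k-1)`. -/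
theorem back_nbhds_cover (k : ℕ) (hk : 2 ≤ k) (ε : ℝ) (hε : 0 < ε) :
    ∃ m n₀ : ℕ, ∀ (α : Type) [Fintype α] [DecidableEq α]
      (G : Finset (Finset α)), (∀ e ∈ G, e.card = k) →
      n₀ < Fintype.card α →
      (∀ e : Finset α, e.card = k - 1 →
        ε * (Fintype.card α : ℝ) ≤ ((nbhd G e).card : ℝ)) →
      ∃ f : Fin m → Finset α, (∀ i, (f i).card = k - 2) ∧
        ((Nat.choose (Fintype.card α) (k - 1) : ℝ) -
            (Nat.choose ⌊ε * (Fintype.card α : ℝ)⌋₊ (k - 1) : ℝ)) <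
          (((Finset.univ.biUnion fun i => backNbhd G k (f i)).card : ℝ)) :=
  back_nbhds_cover_general k ε hε
end

section
/- Let G be a k-graph on n vertices with δ_{k−1}(G) ≥ εn, and fix a (k−2)-set f ⊆ V(G). For every η > 0 there exist μ = μ(η, ε) > 0 and n₀ such that if n > n₀, then the set 𝒩 = ∪_{w ∈ V∖f} N(fw)^(k−1) is a (μ, η)-good subset of V^(k−1). In fact one may take μ = (ε/k)·η. -/
open Finset

/-- `A` is a `(μ, η)`-good subset of the `(k-1)`-subsets of the finite set `V`. -/
def IsGood {α : Type*} [DecidableEq α] (V : Finset α) (k : ℕ) (μ η : ℝ)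
    (A : Finset (Finset α)) : Prop :=
  ∃ (t : ℕ) (P : Fin t → Finset α),
    (∀ i, P i ⊆ V) ∧
    (∀ i j, i ≠ j → Disjoint (P i) (P j)) ∧
    (∀ i, ∀ e ⊆ P i, e.card = k - 1 → e ∈ A) ∧
    (∀ i, μ * (V.card : ℝ) ≤ ((P i).card : ℝ)) ∧
    (((V \ Finset.univ.biUnion P).card : ℝ) ≤ η * (V.card : ℝ))

/-!
Double counting the pairs `(w, v)` with `f ∪ {v, w} ∈ G` shows that for every `S` with
`|S| > ηn` the sizes `|N(fw) ∩ S|`, `w ∉ f`, sum to at least `(ηn - k)(εn - k) ≥ (ε/k)η n²`,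
so some `N(fw)` meets `S` in at least `μn = (ε/k)ηn` vertices. Removing `N(fw) ∩ S` from `S`
and repeating until at most `ηn` vertices are left produces disjoint pieces `A_i ⊆ N(fw_i)`
of size at least `μn`, and every `(k-1)`-subset of such a piece lies in `𝒩`.
-/

open Function

theorem Fin.pairwise_disjoint_cons {β : Type*} [PartialOrder β] [OrderBot β] {t : ℕ} {a : β}
    {p : Fin t → β} (ha : ∀ j, Disjoint a (p j)) (hp : Pairwise (Disjoint on p)) :
    Pairwise (Disjoint on (Fin.cons a p : Fin (t + 1) → β)) := by
  intro i j hij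
  cases i using Fin.cases <;> cases j using Fin.cases
  · exact absurd rfl hij
  · exact ha _
  · exact (ha _).symm
  · exact hp (ne_of_apply_ne Fin.succ hij)

theorem Finset.biUnion_fin_cons {α : Type*} [DecidableEq α] {t : ℕ} (A : Finset α)
    (P : Fin t → Finset α) :
    univ.biUnion (Fin.cons A P : Fin (t + 1) → Finset α) = A ∪ univ.biUnion P := by
  ext
  simp [Fin.exists_fin_succ]

theorem Finset.exists_disjoint_large_pieces {α ι : Type*} [DecidableEq α] (N : ι → Finset α)
    {m β : ℝ} (hm : 0 < m) (hN : ∀ S : Finset α, β < #S → ∃ i, m ≤ #(N i ∩ S))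
    (S : Finset α) :
    ∃ (t : ℕ) (P : Fin t → Finset α), (∀ j, P j ⊆ S) ∧ Pairwise (Disjoint on P) ∧
      (∀ j, ∃ i, P j ⊆ N i) ∧ (∀ j, m ≤ #(P j)) ∧ (#(S \ univ.biUnion P) : ℝ) ≤ β := by
  induction S using Finset.strongInduction with
  | H S ih =>
  by_cases hS : (#S : ℝ) ≤ β
  · exact ⟨0, Fin.elim0, finZeroElim, finZeroElim, finZeroElim, finZeroElim, by simpa⟩
  obtain ⟨i, hi⟩ := hN S (not_le.1 hS)
  have hA : (N i ∩ S).Nonempty := card_pos.1 (by exact_mod_cast hm.trans_le hi)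
  obtain ⟨t, P, hPS, hPdisj, hPN, hPm, hrest⟩ := ih _ (sdiff_ssubset inter_subset_right hA)
  refine ⟨t + 1, Fin.cons (N i ∩ S) P, ?_, ?_, ?_, ?_, ?_⟩
  · simpa [Fin.forall_fin_succ] using fun j => (hPS j).trans sdiff_subset
  · exact Fin.pairwise_disjoint_cons (fun j => disjoint_sdiff.mono_right (hPS j)) hPdisj
  · simpa [Fin.forall_fin_succ] using ⟨⟨i, inter_subset_left⟩, hPN⟩
  · simpa [Fin.forall_fin_succ] using ⟨hi, hPm⟩
  · rwa [biUnion_fin_cons, ← sup_eq_union, ← sdiff_sdiff_left]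

theorem div_mul_mul_sq_le_sub_mul_sub {k ε η n : ℝ} (hk : 2 ≤ k) (hε : 0 < ε) (hη : 0 < η)
    (hn : k ^ 2 / ε + k ^ 2 / η ≤ n) :
    ε / k * η * n ^ 2 ≤ (η * n - k) * (ε * n - k) := by
  -- the right side is `εηn² - k(ε+η)n + k²`, and `hn` bounds `k(ε+η)n` by `εηn²/k`
  have hkpos : 0 < k := by linarith
  have hn' : k ^ 2 * (ε + η) ≤ ε * η * n := by
    have := mul_le_mul_of_nonneg_left hn (mul_pos hε hη).le
    rwa [mul_add, show ε * η * (k ^ 2 / ε) = k ^ 2 * η by field_simp,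
      show ε * η * (k ^ 2 / η) = k ^ 2 * ε by field_simp, ← mul_add, add_comm η] at this
  have hnpos : 0 < n := lt_of_lt_of_le (by positivity) hn
  rw [div_mul_eq_mul_div, div_mul_eq_mul_div, div_le_iff₀ hkpos]
  nlinarith [mul_le_mul_of_nonneg_right hn' hnpos.le, mul_pos (mul_pos hε hη) (mul_pos hnpos hnpos),
    pow_pos hkpos 3]

section Link

variable {α : Type*} [Fintype α] [DecidableEq α] (G : Finset (Finset α))

theorem mem_nbhd_insert_comm {f : Finset α} {v w : α} :
    v ∈ nbhd G (insert w f) ↔ w ∈ nbhd G (insert v f) := by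
  simp only [nbhd, mem_filter, mem_univ, true_and, insert_comm]

theorem sum_card_nbhd_insert_inter_comm (f T U : Finset α) :
    ∑ w ∈ T, #(nbhd G (insert w f) ∩ U) = ∑ v ∈ U, #(nbhd G (insert v f) ∩ T) := by
  have key := sum_card_bipartiteAbove_eq_sum_card_bipartiteBelow
    (fun w v => v ∈ nbhd G (insert w f)) (s := T) (t := U)
  simp only [bipartiteAbove, bipartiteBelow, mem_nbhd_insert_comm G] at key
  simpa only [filter_mem_eq_inter, inter_comm] using key

theorem card_sdiff_mul_le_sum_card_nbhd_inter {δ : ℝ} {f : Finset α}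
    (hdeg : ∀ e : Finset α, #e = #f + 1 → δ ≤ #(nbhd G e)) (S : Finset α) :
    #(S \ f) * (δ - #f) ≤ ∑ w ∈ univ \ f, (#(nbhd G (insert w f) ∩ S) : ℝ) := by
  have hlink : ∀ v ∈ S \ f, δ - #f ≤ #(nbhd G (insert v f) ∩ (univ \ f)) := by
    intro v hv
    have hcodeg := hdeg _ (card_insert_of_notMem (mem_sdiff.1 hv).2)
    have hsdiff : #(nbhd G (insert v f)) ≤ #(nbhd G (insert v f) ∩ (univ \ f)) + #f := by
      rw [show nbhd G (insert v f) ∩ (univ \ f) = nbhd G (insert v f) \ f by ext; simp]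
      exact card_le_card_sdiff_add_card
    have : (#(nbhd G (insert v f)) : ℝ) ≤ #(nbhd G (insert v f) ∩ (univ \ f)) + #f := by
      exact_mod_cast hsdiff
    linarith
  calc #(S \ f) * (δ - #f) = ∑ _v ∈ S \ f, (δ - #f) := by rw [sum_const, nsmul_eq_mul]
    _ ≤ ∑ v ∈ S \ f, (#(nbhd G (insert v f) ∩ (univ \ f)) : ℝ) := sum_le_sum hlink
    _ = ∑ w ∈ univ \ f, (#(nbhd G (insert w f) ∩ (S \ f)) : ℝ) := by
      exact_mod_cast (sum_card_nbhd_insert_inter_comm G f _ _).symm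
    _ ≤ ∑ w ∈ univ \ f, (#(nbhd G (insert w f) ∩ S) : ℝ) := by
      gcongr; exact sdiff_subset

theorem exists_notMem_le_card_nbhd_insert_inter {k : ℕ} (hk : 2 ≤ k) {ε η : ℝ} (hε : 0 < ε)
    (hη : 0 < η) (hn : (k : ℝ) ^ 2 / ε + k ^ 2 / η ≤ Fintype.card α)
    (hdeg : ∀ e : Finset α, #e = k - 1 → ε * Fintype.card α ≤ #(nbhd G e))
    {f : Finset α} (hf : #f = k - 2) {S : Finset α} (hS : η * Fintype.card α < #S) :
    ∃ w ∉ f, ε / k * η * Fintype.card α ≤ #(nbhd G (insert w f) ∩ S) := by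
  set n : ℝ := (Fintype.card α : ℝ)
  have hk' : (2 : ℝ) ≤ k := by exact_mod_cast hk
  have hfk : (#f : ℝ) ≤ k := by rw [hf]; exact_mod_cast Nat.sub_le k 2
  have hεn : (k : ℝ) ≤ ε * n := by
    have : (k : ℝ) ^ 2 ≤ ε * n := by
      rw [← div_le_iff₀' hε]; linarith [div_pos (by positivity : (0 : ℝ) < k ^ 2) hη]
    nlinarith
  have hSf : η * n - k ≤ #(S \ f) := by
    have : (#S : ℝ) ≤ #(S \ f) + #f := by exact_mod_cast card_le_card_sdiff_add_card
    linarith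
  have hlow : n * (ε / k * η * n) ≤ ∑ w ∈ univ \ f, (#(nbhd G (insert w f) ∩ S) : ℝ) :=
    calc n * (ε / k * η * n) = ε / k * η * n ^ 2 := by ring
      _ ≤ (η * n - k) * (ε * n - k) := div_mul_mul_sq_le_sub_mul_sub hk' hε hη hn
      _ ≤ #(S \ f) * (ε * n - #f) := by gcongr
      _ ≤ _ := card_sdiff_mul_le_sum_card_nbhd_inter G (fun e he => hdeg e (by omega)) S
  have hpos : 0 < n * (ε / k * η * n) := by
    have : 0 < n := lt_of_lt_of_le (by positivity) hn
    positivity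
  have hne : (univ \ f).Nonempty := nonempty_of_sum_ne_zero (hpos.trans_le hlow).ne'
  have hcard : (#(univ \ f) : ℝ) ≤ n := Nat.cast_le.2 (card_le_univ _)
  obtain ⟨w, hw, hle⟩ := exists_le_of_sum_le hne <| calc
    ∑ _w ∈ univ \ f, ε / k * η * n = #(univ \ f) * (ε / k * η * n) := by
      rw [sum_const, nsmul_eq_mul]
    _ ≤ _ := by gcongr
    _ ≤ _ := hlow
  exact ⟨w, (mem_sdiff.1 hw).2, hle⟩

end Link

/-- Claim 4.5: let `G` be a `k`-graph on `n` vertices with minimum codegree at least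
`εn`, and fix a `(k-2)`-set `f`. For every `η > 0` there is `n₀` such that if
`n > n₀`, the set `𝒩 = ⋃_{w ∉ f} N(fw)^(k-1)` of all `(k-1)`-sets contained in some
neighbourhood `N(f ∪ {w})` is a `(μ, η)`-good subset of the `(k-1)`-subsets of the
vertex set, with `μ = (ε/k)·η`. -/
theorem link_union_good (k : ℕ) (hk : 3 ≤ k) (ε : ℝ) (hε : 0 < ε) (η : ℝ)
    (hη : 0 < η) :
    ∃ n₀ : ℕ, ∀ (α : Type) [Fintype α] [DecidableEq α]
      (G : Finset (Finset α)), (∀ e ∈ G, e.card = k) →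
      n₀ < Fintype.card α →
      (∀ e : Finset α, e.card = k - 1 →
        ε * (Fintype.card α : ℝ) ≤ ((nbhd G e).card : ℝ)) →
      ∀ f : Finset α, f.card = k - 2 →
      IsGood (Finset.univ : Finset α) k ((ε / k) * η) η
        ((Finset.univ.powersetCard (k - 1)).filter fun e =>
          ∃ w ∉ f, e ⊆ nbhd G (insert w f)) := by
  refine ⟨⌈(k : ℝ) ^ 2 / ε + k ^ 2 / η⌉₊, fun α _ _ G _ hn hdeg f hf => ?_⟩
  have hn' : (k : ℝ) ^ 2 / ε + k ^ 2 / η ≤ Fintype.card α :=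
    (Nat.le_ceil _).trans (by exact_mod_cast hn.le)
  have hcard_pos : 0 < Fintype.card α := by omega
  have hcover (S : Finset α) (hS : η * Fintype.card α < #S) :
      ∃ w : {w // w ∉ f}, ε / k * η * Fintype.card α ≤ #(nbhd G (insert w.1 f) ∩ S) := by
    obtain ⟨w, hw, hle⟩ :=
      exists_notMem_le_card_nbhd_insert_inter G (by omega) hε hη hn' hdeg hf hS
    exact ⟨⟨w, hw⟩, hle⟩
  obtain ⟨t, P, hPV, hPdisj, hPN, hPcard, hrest⟩ :=
    exists_disjoint_large_pieces (fun w : {w // w ∉ f} => nbhd G (insert w.1 f))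
      (by positivity) hcover univ
  refine ⟨t, P, hPV, hPdisj, fun i e he hek => ?_, by simpa using hPcard, by simpa using hrest⟩
  obtain ⟨w, hw⟩ := hPN i
  exact mem_filter.2 ⟨mem_powersetCard.2 ⟨subset_univ e, hek⟩, w.1, w.2, he.trans hw⟩
end
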